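/- Let T be a topological space and let A, B ⊆ T be closed subsets with A ∪ B = T, each having finitely many connected components (in the subspace topology). Assume that every connected component of A intersects at most one connected component of B, and every connected component of B intersects at most one connected component of A. Then every connected component of T contains at most one connected component of A and at most one connected component of B; consequently, the number of connected components of T is at least max(a, b), where a and b are the numbers of connected components of A and B respectively. -/
import Mathlib


open Set

/-- Auxiliary: a union of connected components (in a closed set `S` with finitely many
components) selected by a property `P` is closed in the ambient space. -/
private lemma aux_isClosed_part {T : Type*} [TopologicalSpace T] (S : Set T) (hS : IsClosed S)
    (hfin : Finite (ConnectedComponents S)) (P : Set T → Prop) :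
    IsClosed {t : T | ∃ _ : t ∈ S, P (connectedComponentIn S t)} := by
  have hset : {t : T | ∃ _ : t ∈ S, P (connectedComponentIn S t)} =
      Subtype.val '' {p : S | P (connectedComponentIn S ↑p)} := by
    ext t
    constructor
    · rintro ⟨ht, hP⟩; exact ⟨⟨t, ht⟩, hP, rfl⟩
    · rintro ⟨p, hP, rfl⟩; exact ⟨p.2, hP⟩
  rw [hset]
  have hset2 : {p : S | P (connectedComponentIn S ↑p)} =
      ⋃ c ∈ {c : ConnectedComponents S |
          P (Subtype.val '' ((↑) ⁻¹' {c} : Set S))},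
        ((↑) : S → ConnectedComponents S) ⁻¹' {c} := by
    ext p
    simp only [mem_setOf_eq, mem_iUnion, mem_preimage, mem_singleton_iff, exists_prop]
    constructor
    · intro hP
      refine ⟨(p : ConnectedComponents S), ?_, rfl⟩
      rw [connectedComponents_preimage_singleton]
      rwa [connectedComponentIn_eq_image p.2, Subtype.coe_eta] at hP
    · rintro ⟨c, hP, rfl⟩
      rw [connectedComponents_preimage_singleton] at hP
      rwa [connectedComponentIn_eq_image p.2, Subtype.coe_eta]
  apply hS.isClosedEmbedding_subtypeVal.isClosedMap
  rw [hset2]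
  refine Set.Finite.isClosed_biUnion (Set.toFinite _) ?_
  intro c _
  obtain ⟨p, rfl⟩ := ConnectedComponents.surjective_coe c
  rw [connectedComponents_preimage_singleton]
  exact isClosed_connectedComponent

/-- Key step: two components of `A` inside the same component of `T` coincide. -/
private lemma aux_key {T : Type*} [TopologicalSpace T] (A B : Set T)
    (hAclosed : IsClosed A) (hBclosed : IsClosed B) (hUnion : A ∪ B = Set.univ)
    (hAfin : Finite (ConnectedComponents A)) (hBfin : Finite (ConnectedComponents B))
    (hBA : ∀ y ∈ B, ∀ x ∈ A, ∀ x' ∈ A,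
      (connectedComponentIn B y ∩ connectedComponentIn A x).Nonempty →
      (connectedComponentIn B y ∩ connectedComponentIn A x').Nonempty →
      connectedComponentIn A x = connectedComponentIn A x') :
    ∀ z : T, ∀ x ∈ A, ∀ x' ∈ A,
        connectedComponentIn A x ⊆ connectedComponent z →
        connectedComponentIn A x' ⊆ connectedComponent z →
        connectedComponentIn A x = connectedComponentIn A x' := by
  intro z x hx x' hx' h1 h2
  set K := connectedComponentIn A x with hK
  set L := {t : T | ∃ _ : t ∈ B, (connectedComponentIn B t ∩ K).Nonempty} with hL
  set D := K ∪ L with hD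
  -- K is the union of A-components equal to K
  have hKeq : K = {t : T | ∃ _ : t ∈ A, connectedComponentIn A t = K} := by
    ext t
    constructor
    · intro ht
      exact ⟨connectedComponentIn_subset A x ht, (connectedComponentIn_eq (show t ∈ connectedComponentIn A x from ht)).symm⟩
    · rintro ⟨htA, heq⟩
      rw [← heq]
      exact mem_connectedComponentIn htA
  have hKclosed : IsClosed K := by
    rw [hKeq]; exact aux_isClosed_part A hAclosed hAfin (· = K)
  have hLclosed : IsClosed L :=
    aux_isClosed_part B hBclosed hBfin (fun s => (s ∩ K).Nonempty)
  have hA'closed : IsClosed {t : T | ∃ _ : t ∈ A, connectedComponentIn A t ≠ K} :=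
    aux_isClosed_part A hAclosed hAfin (· ≠ K)
  have hB'closed : IsClosed {t : T | ∃ _ : t ∈ B, ¬(connectedComponentIn B t ∩ K).Nonempty} :=
    aux_isClosed_part B hBclosed hBfin (fun s => ¬(s ∩ K).Nonempty)
  -- the complement of D
  have hDc : Dᶜ = {t : T | ∃ _ : t ∈ A, connectedComponentIn A t ≠ K} ∪
      {t : T | ∃ _ : t ∈ B, ¬(connectedComponentIn B t ∩ K).Nonempty} := by
    ext t
    simp only [mem_compl_iff, hD, mem_union, mem_setOf_eq, not_or]
    constructor
    · rintro ⟨htK, htL⟩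
      have htU : t ∈ A ∪ B := hUnion ▸ mem_univ t
      rcases htU with htA | htB
      · left
        refine ⟨htA, fun heq => htK ?_⟩
        rw [← heq]; exact mem_connectedComponentIn htA
      · right
        refine ⟨htB, fun hne => htL ⟨htB, hne⟩⟩
    · rintro (⟨htA, hne⟩ | ⟨htB, hnon⟩)
      · constructor
        · intro htK
          exact hne (connectedComponentIn_eq (show t ∈ connectedComponentIn A x from htK)).symm
        · rintro ⟨htB, w, hw1, hw2⟩
          apply hne
          exact (hBA t htB x hx t htA ⟨w, hw1, hw2⟩
            ⟨t, mem_connectedComponentIn htB, mem_connectedComponentIn htA⟩).symm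
      · constructor
        · intro htK
          exact hnon ⟨t, mem_connectedComponentIn htB, htK⟩
        · rintro ⟨_, hne⟩
          exact hnon hne
  have hDclopen : IsClopen D := by
    refine ⟨hKclosed.union hLclosed, ?_⟩
    rw [← isClosed_compl_iff, hDc]
    exact hA'closed.union hB'closed
  -- x ∈ K ⊆ component of z, so component of z ⊆ D
  have hxK : x ∈ K := mem_connectedComponentIn hx
  have hxz : x ∈ connectedComponent z := h1 hxK
  have hsub : connectedComponent z ⊆ D := by
    have h3 : connectedComponent x ⊆ D := hDclopen.connectedComponent_subset (Or.inl hxK)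
    have h4 : connectedComponent x = connectedComponent z := (connectedComponent_eq hxz).symm
    rwa [h4] at h3
  have hx'D : x' ∈ D := hsub (h2 (mem_connectedComponentIn hx'))
  rcases hx'D with hx'K | ⟨hx'B, w, hw1, hw2⟩
  · exact connectedComponentIn_eq (show x' ∈ connectedComponentIn A x from hx'K)
  · exact hBA x' hx'B x hx x' hx' ⟨w, hw1, hw2⟩
      ⟨x', mem_connectedComponentIn hx'B, mem_connectedComponentIn hx'⟩

/-- The natural map `ConnectedComponents ↥S → ConnectedComponents T`. -/
private def aux_cmap {T : Type*} [TopologicalSpace T] (S : Set T) :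
    ConnectedComponents S → ConnectedComponents T :=
  (continuous_subtype_val (p := (· ∈ S))).connectedComponentsMap

private lemma aux_cmap_mk {T : Type*} [TopologicalSpace T] (S : Set T) (p : S) :
    aux_cmap S (p : ConnectedComponents S) = ((p : T) : ConnectedComponents T) := rfl

private lemma aux_cmap_inj {T : Type*} [TopologicalSpace T] (S : Set T)
    (hkey : ∀ z : T, ∀ x ∈ S, ∀ x' ∈ S,
        connectedComponentIn S x ⊆ connectedComponent z →
        connectedComponentIn S x' ⊆ connectedComponent z →
        connectedComponentIn S x = connectedComponentIn S x') :
    Function.Injective (aux_cmap S) := by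
  intro c c' h
  obtain ⟨p, rfl⟩ := ConnectedComponents.surjective_coe c
  obtain ⟨q, rfl⟩ := ConnectedComponents.surjective_coe c'
  rw [aux_cmap_mk, aux_cmap_mk, ConnectedComponents.coe_eq_coe] at h
  have h1 : connectedComponentIn S (p : T) ⊆ connectedComponent (p : T) :=
    isPreconnected_connectedComponentIn.subset_connectedComponent
      (mem_connectedComponentIn p.2)
  have h2 : connectedComponentIn S (q : T) ⊆ connectedComponent (p : T) := by
    rw [h]
    exact isPreconnected_connectedComponentIn.subset_connectedComponent
      (mem_connectedComponentIn q.2)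
  have heq := hkey (p : T) (p : T) p.2 (q : T) q.2 h1 h2
  have hq : (q : T) ∈ connectedComponentIn S (p : T) := by
    rw [heq]; exact mem_connectedComponentIn q.2
  rw [connectedComponentIn_eq_image p.2, Subtype.coe_eta] at hq
  obtain ⟨r, hr, hrq⟩ := hq
  have : r = q := Subtype.val_injective hrq
  rw [ConnectedComponents.coe_eq_coe]
  exact connectedComponent_eq (this ▸ hr)

private lemma aux_finite {T : Type*} [TopologicalSpace T] (A B : Set T)
    (hUnion : A ∪ B = Set.univ)
    (hAfin : Finite (ConnectedComponents A)) (hBfin : Finite (ConnectedComponents B)) :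
    Finite (ConnectedComponents T) := by
  have hsurj : Function.Surjective
      (Sum.elim (aux_cmap A) (aux_cmap B)) := by
    intro c
    obtain ⟨t, rfl⟩ := ConnectedComponents.surjective_coe c
    have ht : t ∈ A ∪ B := hUnion ▸ Set.mem_univ t
    rcases ht with htA | htB
    · exact ⟨Sum.inl ((⟨t, htA⟩ : A) : ConnectedComponents A), rfl⟩
    · exact ⟨Sum.inr ((⟨t, htB⟩ : B) : ConnectedComponents B), rfl⟩
  exact Finite.of_surjective _ hsurj

/-- Abstract content of Lemma 3.6 and Corollary 3.7: if `T = A ∪ B` with `A`, `B`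
closed, each with finitely many connected components, and each connected component of
`A` meets at most one connected component of `B` and vice versa, then each connected
component of `T` contains at most one connected component of `A` and at most one of
`B`; consequently `T` has at least `max a b` connected components. -/
theorem ncomp_union_ge_max {T : Type*} [TopologicalSpace T] (A B : Set T)
    (hAclosed : IsClosed A) (hBclosed : IsClosed B) (hUnion : A ∪ B = Set.univ)
    (hAfin : Finite (ConnectedComponents A)) (hBfin : Finite (ConnectedComponents B))
    (a b : ℕ) (ha : Nat.card (ConnectedComponents A) = a)
    (hb : Nat.card (ConnectedComponents B) = b)
    (hAB : ∀ x ∈ A, ∀ y ∈ B, ∀ y' ∈ B,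
      (connectedComponentIn A x ∩ connectedComponentIn B y).Nonempty →
      (connectedComponentIn A x ∩ connectedComponentIn B y').Nonempty →
      connectedComponentIn B y = connectedComponentIn B y')
    (hBA : ∀ y ∈ B, ∀ x ∈ A, ∀ x' ∈ A,
      (connectedComponentIn B y ∩ connectedComponentIn A x).Nonempty →
      (connectedComponentIn B y ∩ connectedComponentIn A x').Nonempty →
      connectedComponentIn A x = connectedComponentIn A x') :
    (∀ z : T, ∀ x ∈ A, ∀ x' ∈ A,
        connectedComponentIn A x ⊆ connectedComponent z →
        connectedComponentIn A x' ⊆ connectedComponent z →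
        connectedComponentIn A x = connectedComponentIn A x') ∧
    (∀ z : T, ∀ y ∈ B, ∀ y' ∈ B,
        connectedComponentIn B y ⊆ connectedComponent z →
        connectedComponentIn B y' ⊆ connectedComponent z →
        connectedComponentIn B y = connectedComponentIn B y') ∧
    max a b ≤ Nat.card (ConnectedComponents T) := by
  have keyA := aux_key A B hAclosed hBclosed hUnion hAfin hBfin hBA
  have keyB := aux_key B A hBclosed hAclosed (by rw [Set.union_comm]; exact hUnion) hBfin hAfin hAB
  refine ⟨keyA, keyB, ?_⟩
  have : Finite (ConnectedComponents T) := aux_finite A B hUnion hAfin hBfin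
  have hA : a ≤ Nat.card (ConnectedComponents T) := by
    rw [← ha]
    exact Nat.card_le_card_of_injective _ (aux_cmap_inj A keyA)
  have hB : b ≤ Nat.card (ConnectedComponents T) := by
    rw [← hb]
    exact Nat.card_le_card_of_injective _ (aux_cmap_inj B keyB)
  exact max_le hA hB
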